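/- Let p ∈ ℂ[[X]] be a formal power series with constantCoeff p = 0 and coeff 1 p = 1. Then for every natural number j ≥ 1 there exist complex numbers c_0, c_1, …, c_{j−1} ∈ ℂ such that for every natural number n, coeff j (p^{∘n}) = Σ_{l=0}^{j−1} c_l · n^l; that is, the j-th coefficient of the n-th compositional iterate of p is a polynomial in n of degree at most j − 1. -/

import Mathlib

open PowerSeries

/-- Composition of formal power series: `psComp g h = g ∘ h`, with
`coeff j (g ∘ h) = ∑_{l=0}^{j} (coeff l g) * (coeff j (h^l))`. -/
noncomputable def psComp (g h : PowerSeries ℂ) : PowerSeries ℂ :=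
  PowerSeries.mk fun j =>
    ∑ l ∈ Finset.range (j + 1), (coeff l g) * (coeff j (h ^ l))


/-- Compositional iterates: `psIter p 0 = X`, `psIter p (i+1) = p ∘ (psIter p i)`. -/
noncomputable def psIter (p : PowerSeries ℂ) : ℕ → PowerSeries ℂ
  | 0 => PowerSeries.X
  | i + 1 => psComp p (psIter p i)

/-! ### Polynomial growth predicate -/

/-- `f : ℕ → ℂ` agrees with a polynomial of degree at most `d`. -/
def IsPolyLE (d : ℕ) (f : ℕ → ℂ) : Prop :=
  ∃ P : Polynomial ℂ, P.natDegree ≤ d ∧ ∀ n : ℕ, f n = P.eval (n : ℂ)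

namespace IsPolyLE

theorem mono {d d' : ℕ} {f : ℕ → ℂ} (h : IsPolyLE d f) (hdd : d ≤ d') : IsPolyLE d' f := by
  obtain ⟨P, hP, hPf⟩ := h; exact ⟨P, hP.trans hdd, hPf⟩

theorem congr {d : ℕ} {f g : ℕ → ℂ} (h : IsPolyLE d f) (hfg : ∀ n, f n = g n) :
    IsPolyLE d g := by
  obtain ⟨P, hP, hPf⟩ := h; exact ⟨P, hP, fun n => (hfg n) ▸ hPf n⟩

theorem const (a : ℂ) (d : ℕ) : IsPolyLE d fun _ => a :=
  ⟨Polynomial.C a, by simp, by simp⟩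

theorem zero (d : ℕ) : IsPolyLE d fun _ => 0 := const 0 d

theorem add {d : ℕ} {f g : ℕ → ℂ} (hf : IsPolyLE d f) (hg : IsPolyLE d g) :
    IsPolyLE d fun n => f n + g n := by
  obtain ⟨P, hP, hPf⟩ := hf; obtain ⟨Q, hQ, hQg⟩ := hg
  exact ⟨P + Q, (Polynomial.natDegree_add_le _ _).trans (max_le hP hQ),
    fun n => by simp [hPf, hQg]⟩

theorem sub {d : ℕ} {f g : ℕ → ℂ} (hf : IsPolyLE d f) (hg : IsPolyLE d g) :
    IsPolyLE d fun n => f n - g n := by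
  obtain ⟨P, hP, hPf⟩ := hf; obtain ⟨Q, hQ, hQg⟩ := hg
  exact ⟨P - Q, (Polynomial.natDegree_sub_le _ _).trans (max_le hP hQ),
    fun n => by simp [hPf, hQg]⟩

theorem mul {a b : ℕ} {f g : ℕ → ℂ} (hf : IsPolyLE a f) (hg : IsPolyLE b g) :
    IsPolyLE (a + b) fun n => f n * g n := by
  obtain ⟨P, hP, hPf⟩ := hf; obtain ⟨Q, hQ, hQg⟩ := hg
  exact ⟨P * Q, Polynomial.natDegree_mul_le.trans (add_le_add hP hQ),
    fun n => by simp [hPf, hQg]⟩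

theorem smul (a : ℂ) {d : ℕ} {f : ℕ → ℂ} (hf : IsPolyLE d f) :
    IsPolyLE d fun n => a * f n :=
  ((const a 0).mul hf).mono (by omega)

theorem sum {ι : Type*} (s : Finset ι) (d : ℕ) (f : ι → ℕ → ℂ)
    (h : ∀ i ∈ s, IsPolyLE d (f i)) : IsPolyLE d fun n => ∑ i ∈ s, f i n := by
  classical
  revert h
  induction s using Finset.induction_on with
  | empty => intro h; exact (zero d).congr (by simp)
  | @insert x s hx ihs =>
    intro h
    exact ((h x (Finset.mem_insert_self _ _)).add
      (ihs fun i hi => h i (Finset.mem_insert_of_mem hi))).congr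
      (fun n => by rw [Finset.sum_insert hx])

theorem X_pow {l d : ℕ} (h : l ≤ d) : IsPolyLE d fun n => (n : ℂ) ^ l :=
  ⟨Polynomial.X ^ l, (Polynomial.natDegree_X_pow_le l).trans h, fun n => by simp⟩

/-- Key lemma: `∑_{m<n} m^l` is a polynomial in `n` of degree `≤ l+1`. -/
theorem sum_pow (l : ℕ) : IsPolyLE (l + 1) fun n => ∑ m ∈ Finset.range n, (m : ℂ) ^ l := by
  induction l using Nat.strong_induction_on with
  | _ l ih =>
    have key : ∀ n : ℕ, (n : ℂ) ^ (l + 1) =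
        ∑ k ∈ Finset.range (l + 1),
          (Nat.choose (l + 1) k : ℂ) * ∑ m ∈ Finset.range n, (m : ℂ) ^ k := by
      intro n
      have tele := Finset.sum_range_sub (fun m => ((m : ℕ) : ℂ) ^ (l + 1)) n
      simp only [Nat.cast_add, Nat.cast_ofNat, Nat.cast_one, Nat.cast_zero] at tele
      rw [zero_pow (by omega : l + 1 ≠ 0), sub_zero] at tele
      have expand : ∀ m : ℕ, ((m : ℂ) + 1) ^ (l + 1) - (m : ℂ) ^ (l + 1) =
          ∑ k ∈ Finset.range (l + 1), (Nat.choose (l + 1) k : ℂ) * (m : ℂ) ^ k := by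
        intro m
        have hb := add_pow (m : ℂ) 1 (l + 1)
        rw [Finset.sum_range_succ] at hb
        simp only [one_pow, mul_one, Nat.choose_self, Nat.cast_one, Nat.sub_self,
          pow_zero] at hb
        rw [hb, add_sub_cancel_right]
        exact Finset.sum_congr rfl fun k _ => by ring
      calc (n : ℂ) ^ (l + 1)
          = ∑ m ∈ Finset.range n, (((m : ℂ) + 1) ^ (l + 1) - (m : ℂ) ^ (l + 1)) := tele.symm
        _ = ∑ m ∈ Finset.range n, ∑ k ∈ Finset.range (l + 1),
              (Nat.choose (l + 1) k : ℂ) * (m : ℂ) ^ k :=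
            Finset.sum_congr rfl fun m _ => expand m
        _ = ∑ k ∈ Finset.range (l + 1),
              (Nat.choose (l + 1) k : ℂ) * ∑ m ∈ Finset.range n, (m : ℂ) ^ k := by
            rw [Finset.sum_comm]
            exact Finset.sum_congr rfl fun k _ => (Finset.mul_sum _ _ _).symm
    have hsplit : ∀ n : ℕ, ((l : ℂ) + 1) * (∑ m ∈ Finset.range n, (m : ℂ) ^ l) =
        (n : ℂ) ^ (l + 1) - ∑ k ∈ Finset.range l,
          (Nat.choose (l + 1) k : ℂ) * ∑ m ∈ Finset.range n, (m : ℂ) ^ k := by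
      intro n
      have hkey := key n
      rw [Finset.sum_range_succ, Nat.choose_succ_self_right] at hkey
      rw [hkey]
      push_cast
      ring
    have hne : ((l : ℂ) + 1) ≠ 0 := by
      have h1 : ((l + 1 : ℕ) : ℂ) ≠ 0 := Nat.cast_ne_zero.mpr (by omega)
      push_cast at h1
      exact h1
    have main : IsPolyLE (l + 1) fun n => ((l : ℂ) + 1)⁻¹ *
        ((n : ℂ) ^ (l + 1) - ∑ k ∈ Finset.range l,
          (Nat.choose (l + 1) k : ℂ) * ∑ m ∈ Finset.range n, (m : ℂ) ^ k) := by
      apply smul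
      apply sub (X_pow le_rfl)
      apply sum
      intro k hk
      have hk' : k < l := Finset.mem_range.mp hk
      exact (smul _ (ih k hk')).mono (by omega)
    apply main.congr
    intro n
    rw [← hsplit n, inv_mul_cancel_left₀ hne]

theorem sumRange {d : ℕ} {f : ℕ → ℂ} (h : IsPolyLE d f) :
    IsPolyLE (d + 1) fun n => ∑ m ∈ Finset.range n, f m := by
  obtain ⟨P, hP, hPf⟩ := h
  have heval : ∀ m : ℕ, f m = ∑ k ∈ Finset.range (d + 1), P.coeff k * (m : ℂ) ^ k := by
    intro m
    rw [hPf m, Polynomial.eval_eq_sum_range' (by omega : P.natDegree < d + 1)]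
  have : IsPolyLE (d + 1) fun n => ∑ k ∈ Finset.range (d + 1),
      P.coeff k * ∑ m ∈ Finset.range n, (m : ℂ) ^ k := by
    apply sum
    intro k hk
    have hk' : k < d + 1 := Finset.mem_range.mp hk
    exact (smul _ (sum_pow k)).mono (by omega)
  apply this.congr
  intro n
  calc ∑ k ∈ Finset.range (d + 1), P.coeff k * ∑ m ∈ Finset.range n, (m : ℂ) ^ k
      = ∑ k ∈ Finset.range (d + 1), ∑ m ∈ Finset.range n, P.coeff k * (m : ℂ) ^ k :=
        Finset.sum_congr rfl fun k _ => Finset.mul_sum _ _ _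
    _ = ∑ m ∈ Finset.range n, ∑ k ∈ Finset.range (d + 1), P.coeff k * (m : ℂ) ^ k :=
        Finset.sum_comm
    _ = ∑ m ∈ Finset.range n, f m := Finset.sum_congr rfl fun m _ => (heval m).symm

end IsPolyLE

/-! ### Power series facts -/

theorem coeff_psComp (g h : PowerSeries ℂ) (j : ℕ) :
    coeff j (psComp g h) = ∑ l ∈ Finset.range (j + 1), (coeff l g) * (coeff j (h ^ l)) :=
  PowerSeries.coeff_mk _ _

theorem psIter_coeff_zero (p : PowerSeries ℂ) (hp0 : constantCoeff p = 0) :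
    ∀ n, coeff 0 (psIter p n) = 0 := by
  intro n
  cases n with
  | zero => simp [psIter, PowerSeries.coeff_X]
  | succ n =>
    show coeff 0 (psComp p (psIter p n)) = 0
    rw [coeff_psComp, Finset.sum_range_one]
    rw [← PowerSeries.coeff_zero_eq_constantCoeff] at hp0
    rw [hp0, zero_mul]

theorem coeff_pow_eq_zero_of_lt {q : PowerSeries ℂ} (hq : coeff 0 q = 0) :
    ∀ l c : ℕ, c < l → coeff c (q ^ l) = 0 := by
  intro l
  induction l with
  | zero => omega
  | succ l ih =>
    intro c hc
    rw [pow_succ', PowerSeries.coeff_mul, Finset.Nat.sum_antidiagonal_eq_sum_range_succ_mk]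
    apply Finset.sum_eq_zero
    intro k hk
    rcases Nat.eq_zero_or_pos k with rfl | hkpos
    · simp [hq]
    · have : c - k < l := by
        have := Finset.mem_range.mp hk
        omega
      rw [ih _ this, mul_zero]

theorem psIter_coeff_one (p : PowerSeries ℂ) (hp0 : constantCoeff p = 0)
    (hp1 : coeff 1 p = 1) : ∀ n, coeff 1 (psIter p n) = 1 := by
  intro n
  induction n with
  | zero => simp [psIter, PowerSeries.coeff_X]
  | succ n ih =>
    show coeff 1 (psComp p (psIter p n)) = 1
    rw [coeff_psComp]
    rw [Finset.sum_range_succ, Finset.sum_range_one]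
    rw [← PowerSeries.coeff_zero_eq_constantCoeff] at hp0
    simp [hp0, hp1, pow_one, ih]

/-! ### Main theorem -/

theorem stmt_10 (p : PowerSeries ℂ)
    (hp0 : constantCoeff p = 0) (hp1 : coeff 1 p = 1) :
    ∀ j : ℕ, 1 ≤ j →
      ∃ c : ℕ → ℂ, ∀ n : ℕ,
        coeff j (psIter p n) = ∑ l ∈ Finset.range j, c l * (n : ℂ) ^ l := by
  have hq0 : ∀ n, coeff 0 (psIter p n) = 0 := psIter_coeff_zero p hp0
  have hq1 : ∀ n, coeff 1 (psIter p n) = 1 := psIter_coeff_one p hp0 hp1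
  -- Main claim by strong induction on j
  have main : ∀ j : ℕ, 1 ≤ j → IsPolyLE (j - 1) fun n => coeff j (psIter p n) := by
    intro j
    induction j using Nat.strong_induction_on with
    | _ j ih =>
      intro hj
      -- Sub-claim H: for b < j and l ≥ 1, coeff b (q_n^(l+1)) is poly of degree ≤ b - (l+1)
      have H : ∀ l : ℕ, ∀ b : ℕ, b < j →
          IsPolyLE (b - (l + 1)) fun n => coeff b ((psIter p n) ^ (l + 1)) := by
        intro l
        induction l with
        | zero =>
          intro b hb
          rcases Nat.eq_zero_or_pos b with rfl | hbpos
          · exact (IsPolyLE.zero _).congr (fun n => by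
              rw [zero_add, pow_one]; exact (hq0 n).symm)
          · exact ((ih b hb hbpos).mono (by omega)).congr (fun n => by
              rw [zero_add, pow_one])
        | succ l ihl =>
          intro b hb
          have expand : ∀ n : ℕ, coeff b ((psIter p n) ^ (l + 2)) =
              ∑ k ∈ Finset.range (b + 1),
                coeff k (psIter p n) * coeff (b - k) ((psIter p n) ^ (l + 1)) := by
            intro n
            rw [pow_succ', PowerSeries.coeff_mul,
              Finset.Nat.sum_antidiagonal_eq_sum_range_succ_mk]
          have : IsPolyLE (b - (l + 2)) fun n =>
              ∑ k ∈ Finset.range (b + 1),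
                coeff k (psIter p n) * coeff (b - k) ((psIter p n) ^ (l + 1)) := by
            apply IsPolyLE.sum
            intro k hk
            have hk' : k ≤ b := by have := Finset.mem_range.mp hk; omega
            rcases Nat.eq_zero_or_pos k with rfl | hkpos
            · exact (IsPolyLE.zero _).congr (fun n => by rw [hq0 n, zero_mul])
            · rcases lt_or_ge (b - k) (l + 1) with hsmall | hbig
              · exact (IsPolyLE.zero _).congr (fun n => by
                  rw [coeff_pow_eq_zero_of_lt (hq0 n) _ _ hsmall, mul_zero])
              · have h1 : IsPolyLE (k - 1) fun n => coeff k (psIter p n) := by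
                  rcases Nat.eq_or_lt_of_le hkpos with h | h
                  · exact (IsPolyLE.const 1 _).congr (fun n => by
                      rw [← h]; exact (hq1 n).symm)
                  · exact ih k (by omega) hkpos
                have h2 := ihl (b - k) (by omega)
                exact (h1.mul h2).mono (by omega)
          exact this.congr (fun n => (expand n).symm)
      -- case j = 1
      rcases Nat.eq_or_lt_of_le hj with h1 | hj2
      · exact (IsPolyLE.const 1 _).congr (fun n => by rw [← h1]; exact (hq1 n).symm)
      -- case j ≥ 2: sub-claim G for l ≥ 2 at b = j
      have hj2 : 2 ≤ j := hj2
      have G : ∀ l : ℕ, IsPolyLE (j - (l + 2)) fun n => coeff j ((psIter p n) ^ (l + 2)) := by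
        intro l
        have expand : ∀ n : ℕ, coeff j ((psIter p n) ^ (l + 2)) =
            ∑ k ∈ Finset.range (j + 1),
              coeff k (psIter p n) * coeff (j - k) ((psIter p n) ^ (l + 1)) := by
          intro n
          rw [pow_succ', PowerSeries.coeff_mul,
            Finset.Nat.sum_antidiagonal_eq_sum_range_succ_mk]
        have : IsPolyLE (j - (l + 2)) fun n =>
            ∑ k ∈ Finset.range (j + 1),
              coeff k (psIter p n) * coeff (j - k) ((psIter p n) ^ (l + 1)) := by
          apply IsPolyLE.sum
          intro k hk
          have hk' : k ≤ j := by have := Finset.mem_range.mp hk; omega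
          rcases Nat.eq_zero_or_pos k with rfl | hkpos
          · exact (IsPolyLE.zero _).congr (fun n => by rw [hq0 n, zero_mul])
          · rcases lt_or_ge (j - k) (l + 1) with hsmall | hbig
            · exact (IsPolyLE.zero _).congr (fun n => by
                rw [coeff_pow_eq_zero_of_lt (hq0 n) _ _ hsmall, mul_zero])
            · have hklt : k < j := by omega
              have h1 : IsPolyLE (k - 1) fun n => coeff k (psIter p n) := by
                rcases Nat.eq_or_lt_of_le hkpos with h | h
                · exact (IsPolyLE.const 1 _).congr (fun n => by
                    rw [← h]; exact (hq1 n).symm)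
                · exact ih k hklt hkpos
              have h2 := H l (j - k) (by omega)
              exact (h1.mul h2).mono (by omega)
        exact this.congr (fun n => (expand n).symm)
      -- the difference function F
      set F : ℕ → ℂ := fun n => ∑ l ∈ Finset.Ico 2 (j + 1),
        coeff l p * coeff j ((psIter p n) ^ l) with hF
      have hrec : ∀ n : ℕ, coeff j (psIter p (n + 1)) = coeff j (psIter p n) + F n := by
        intro n
        show coeff j (psComp p (psIter p n)) = _
        rw [coeff_psComp]
        have hsplit : ∑ l ∈ Finset.range (j + 1),
            coeff l p * coeff j ((psIter p n) ^ l) =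
            (∑ l ∈ Finset.Ico 0 2, coeff l p * coeff j ((psIter p n) ^ l)) +
            ∑ l ∈ Finset.Ico 2 (j + 1), coeff l p * coeff j ((psIter p n) ^ l) := by
          rw [Finset.sum_Ico_consecutive _ (by omega : 0 ≤ 2) (by omega : 2 ≤ j + 1),
            ← Finset.range_eq_Ico]
        rw [hsplit]
        congr 1
        have : Finset.Ico 0 2 = {0, 1} := by decide
        rw [this]
        rw [Finset.sum_insert (by decide), Finset.sum_singleton]
        rw [← PowerSeries.coeff_zero_eq_constantCoeff] at hp0
        simp only [pow_zero, pow_one, hp0, zero_mul, hp1, one_mul, zero_add]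
      have htele : ∀ n : ℕ, coeff j (psIter p n) = ∑ m ∈ Finset.range n, F m := by
        intro n
        have h0 : coeff j (psIter p 0) = 0 := by
          show coeff j PowerSeries.X = 0
          rw [PowerSeries.coeff_X]
          simp only [if_neg (by omega : ¬ j = 1)]
        have := Finset.sum_range_sub (fun m => coeff j (psIter p m)) n
        rw [h0, sub_zero] at this
        rw [← this]
        apply Finset.sum_congr rfl
        intro m _
        rw [hrec m]; ring
      -- F is IsPolyLE (j - 2)
      have hFpoly : IsPolyLE (j - 2) F := by
        rw [hF]
        apply IsPolyLE.sum
        intro l hl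
        obtain ⟨hl2, hlj⟩ := Finset.mem_Ico.mp hl
        obtain ⟨l', rfl⟩ : ∃ l', l = l' + 2 := ⟨l - 2, by omega⟩
        exact (IsPolyLE.smul _ (G l')).mono (by omega)
      have final := hFpoly.sumRange
      have : j - 2 + 1 = j - 1 := by omega
      rw [this] at final
      exact final.congr (fun n => (htele n).symm)
  intro j hj
  obtain ⟨P, hP, hPf⟩ := main j hj
  refine ⟨fun l => P.coeff l, fun n => ?_⟩
  rw [show coeff j (psIter p n) = Polynomial.eval (n : ℂ) P from hPf n,
    Polynomial.eval_eq_sum_range' (by omega : P.natDegree < j)]
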